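/- arXiv:1710.01828 — 6 statements merged into one kernel-verified Lean document; each statement's English description precedes it below -/
import Mathlib

section
/- Let UT_n carry an elementary G-grading given by a sequence (g_1,…,g_n) ∈ G^n, and let a be an invertible upper triangular matrix such that conjugation φ_a : x ↦ a x a⁻¹ is a graded automorphism. Then every nonzero entry a_{lm} of a with l ≤ m satisfies deg e_{lm} = 1; in particular a is homogeneous of degree 1. -/
open Matrix

/-- A matrix is homogeneous of degree `h` in the elementary grading determined by
`g : Fin n → G` (with `deg e_{ij} = g i * (g j)⁻¹`) if it is upper triangular and all
of its nonzero entries sit in positions of degree `h`. -/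
def IsHomElem {n : ℕ} {K : Type*} [Field K] {G : Type*} [Group G]
    (g : Fin n → G) (h : G) (x : Matrix (Fin n) (Fin n) K) : Prop :=
  (∀ i j : Fin n, j < i → x i j = 0) ∧ ∀ i j : Fin n, x i j ≠ 0 → g i * (g j)⁻¹ = h

/-- if conjugation by an invertible upper triangular matrix `a` is a graded
automorphism for the elementary grading, then every nonzero entry of `a` sits in a
position of degree `1`, i.e. `a` is homogeneous of degree `1`. -/
theorem graded_conj_implies_degree_one {n : ℕ} {K : Type*} [Field K] {G : Type*} [Group G]
    (g : Fin n → G) (a b : Matrix (Fin n) (Fin n) K)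
    (hUTa : ∀ i j : Fin n, j < i → a i j = 0)
    (hUTb : ∀ i j : Fin n, j < i → b i j = 0)
    (hab : a * b = 1) (hba : b * a = 1)
    (hgraded : ∀ (h : G) (x : Matrix (Fin n) (Fin n) K),
      IsHomElem g h x → IsHomElem g h (a * x * b)) :
    ∀ l m : Fin n, a l m ≠ 0 → g l * (g m)⁻¹ = 1 := by
  intro l m hlm
  -- the diagonal entry b m m is nonzero
  have hdiag : a m m * b m m = 1 := by
    have := congrArg (fun x => x m m) hab
    simp only [Matrix.mul_apply, Matrix.one_apply_eq] at this
    rw [← this]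
    rw [Finset.sum_eq_single m]
    · intro k _ hk
      rcases lt_or_gt_of_ne hk with h | h
      · rw [hUTa m k h, zero_mul]
      · rw [hUTb k m h, mul_zero]
    · intro h; exact absurd (Finset.mem_univ m) h
  have hbm : b m m ≠ 0 := by
    intro h; rw [h, mul_zero] at hdiag; exact zero_ne_one hdiag
  -- e_{mm} is homogeneous of degree 1
  set E := Matrix.single m m (1 : K) with hE
  have hhom : IsHomElem g 1 E := by
    constructor
    · intro i j hij
      rw [hE, Matrix.single]
      simp only [Matrix.of_apply]
      rw [if_neg]
      rintro ⟨rfl, rfl⟩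
      exact lt_irrefl _ hij
    · intro i j hij
      rw [hE, Matrix.single] at hij
      simp only [Matrix.of_apply, ne_eq, ite_eq_right_iff, not_forall] at hij
      obtain ⟨⟨rfl, rfl⟩, -⟩ := hij
      exact mul_inv_cancel _
  have hconj := hgraded 1 E hhom
  -- compute (a * E * b) l m = a l m * b m m
  have hentry : (a * E * b) l m = a l m * b m m := by
    have h1 : (a * E) = fun i j => if j = m then a i m else 0 := by
      funext i j
      simp only [Matrix.mul_apply, hE, Matrix.single, Matrix.of_apply]
      rw [Finset.sum_eq_single m]
      · by_cases hj : j = m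
        · simp [hj]
        · simp only [hj, if_false]
          rw [if_neg (fun h => hj h.2.symm), mul_zero]
      · intro k _ hk
        rw [if_neg (fun h => hk h.1.symm), mul_zero]
      · intro h; exact absurd (Finset.mem_univ m) h
    rw [Matrix.mul_apply, h1]
    rw [Finset.sum_eq_single m]
    · simp
    · intro k _ hk
      simp [hk]
    · intro h; exact absurd (Finset.mem_univ m) h
  apply hconj.2 l m
  rw [hentry]
  exact mul_ne_zero hlm hbm
end

section
/- Let ∗ be a linear involution on the associative algebra UT_n over a field K where every automorphism of UT_n is inner. Write x∗ = A t(x) A⁻¹ for some invertible A ∈ UT_n, where t is the antidiagonal flip. Then t(A) = A or t(A) = −A. -/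
open Matrix

/-- The flip along the antidiagonal. -/
def tFlip {n : ℕ} {K : Type*} [Field K] (x : Matrix (Fin n) (Fin n) K) :
    Matrix (Fin n) (Fin n) K :=
  Matrix.of fun i j => x j.rev i.rev

/-!
Since `t` is an anti-automorphism, the involutivity of `x ↦ A t(x) A⁻¹` on `UT_n` says exactly
that `Q = t(A) A⁻¹` commutes with every upper triangular matrix. Commuting with all the matrix
units `e_ij`, `i ≤ j`, forces `Q = c • 1`, i.e. `t(A) = c A`. Applying `t` once more gives
`A = c² A`, and `A ≠ 0`, so `c = ±1`.
-/

theorem Matrix.mem_range_scalar_of_commute_single_of_le {ι α : Type*} [LinearOrder ι]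
    [Fintype ι] [Semiring α] {M : Matrix ι ι α}
    (hM : ∀ i j, i ≤ j → Commute (single i j 1) M) :
    M ∈ Set.range (scalar ι) := by
  cases isEmpty_or_nonempty ι
  · exact ⟨0, Subsingleton.elim _ _⟩
  obtain ⟨i⟩ := ‹Nonempty ι›
  have hdiag (j : ι) : M j j = M i i := by
    rcases le_total i j with hij | hji
    · exact (diag_eq_of_commute_single (hM i j hij)).symm
    · exact diag_eq_of_commute_single (hM j i hji)
  refine ⟨M i i, Matrix.ext fun j k => ?_⟩
  obtain rfl | hjk := eq_or_ne j k
  · simp [hdiag]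
  · rw [scalar_apply, diagonal_apply_ne _ hjk,
      col_eq_zero_of_commute_single (hM k k le_rfl) hjk]

section tFlip

variable {n : ℕ} {K : Type*} [Field K]

lemma tFlip_mul (x y : Matrix (Fin n) (Fin n) K) : tFlip (x * y) = tFlip y * tFlip x := by
  ext i j
  simp only [tFlip, of_apply, mul_apply]
  exact Fintype.sum_equiv Fin.revPerm _ _ fun k => by simp [mul_comm]

@[simp]
lemma tFlip_tFlip (x : Matrix (Fin n) (Fin n) K) : tFlip (tFlip x) = x := by
  ext i j
  simp [tFlip]

@[simp]
lemma tFlip_one : tFlip (1 : Matrix (Fin n) (Fin n) K) = 1 := by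
  ext i j
  simp [tFlip, one_apply, eq_comm]

@[simp]
lemma tFlip_smul (c : K) (x : Matrix (Fin n) (Fin n) K) : tFlip (c • x) = c • tFlip x := by
  ext i j
  simp [tFlip]

lemma commute_tFlip_mul_of_conj_tFlip_conj_eq {A B x : Matrix (Fin n) (Fin n) K}
    (hBA : B * A = 1) (hx : A * tFlip (A * tFlip x * B) * B = x) :
    Commute (tFlip A * B) x := by
  have htA : tFlip A * tFlip B = 1 := by rw [← tFlip_mul, hBA, tFlip_one]
  rw [tFlip_mul, tFlip_mul, tFlip_tFlip] at hx
  calc tFlip A * B * x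
      = tFlip A * (B * A) * tFlip B * x * (tFlip A * B) := by
        conv_lhs => rw [← hx]
        simp only [mul_assoc]
    _ = x * (tFlip A * B) := by rw [hBA, mul_one, htA, one_mul]

lemma eq_one_or_eq_neg_one_of_tFlip_eq_smul {A : Matrix (Fin n) (Fin n) K} {c : K}
    (hA : A ≠ 0) (h : tFlip A = c • A) : c = 1 ∨ c = -1 := by
  have hAc : (c * c) • A = (1 : K) • A := by
    rw [one_smul, mul_smul, ← h, ← tFlip_smul, ← h, tFlip_tFlip]
  exact mul_self_eq_one_iff.mp (smul_left_injective K hA hAc)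

end tFlip

theorem involution_forces_symmetric_or_skew_general {n : ℕ} {K : Type*} [Field K]
    (A B : Matrix (Fin n) (Fin n) K)
    (hBA : B * A = 1)
    (hinv : ∀ x : Matrix (Fin n) (Fin n) K, (∀ i j : Fin n, j < i → x i j = 0) →
      A * tFlip (A * tFlip x * B) * B = x) :
    tFlip A = A ∨ tFlip A = -A := by
  cases subsingleton_or_nontrivial (Matrix (Fin n) (Fin n) K)
  · exact Or.inl (Subsingleton.elim _ _)
  obtain ⟨c, hc⟩ : tFlip A * B ∈ Set.range (scalar (Fin n)) :=
    mem_range_scalar_of_commute_single_of_le fun i j hij =>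
      (commute_tFlip_mul_of_conj_tFlip_conj_eq hBA
        (hinv _ (blockTriangular_single (b := id) hij 1))).symm
  have htA : tFlip A = c • A := by
    rw [smul_eq_diagonal_mul, ← scalar_apply, hc, mul_assoc, hBA, mul_one]
  rcases eq_one_or_eq_neg_one_of_tFlip_eq_smul (right_ne_zero_of_mul_eq_one hBA) htA
    with rfl | rfl
  · exact Or.inl (by rw [htA, one_smul])
  · exact Or.inr (by rw [htA, neg_one_smul])

/-- if the map `x ↦ A t(x) A⁻¹` (with `A` invertible upper triangular) is
involutive on the upper triangular matrices, then `t(A) = A` or `t(A) = −A`. -/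
theorem involution_forces_symmetric_or_skew {n : ℕ} {K : Type*} [Field K]
    (hchar : (2 : K) ≠ 0)
    (A B : Matrix (Fin n) (Fin n) K)
    (hUTA : ∀ i j : Fin n, j < i → A i j = 0)
    (hAB : A * B = 1) (hBA : B * A = 1)
    (hinv : ∀ x : Matrix (Fin n) (Fin n) K, (∀ i j : Fin n, j < i → x i j = 0) →
      A * tFlip (A * tFlip x * B) * B = x) :
    tFlip A = A ∨ tFlip A = -A :=
  involution_forces_symmetric_or_skew_general A B hBA hinv
end

section
/- Let UT_n carry an elementary G-grading given by η = (g_1,…,g_{n−1}) ∈ G^{n−1} with deg e_{i,i+1} = g_i. If UT_n admits a graded involution (a linear involution ∗ with deg x∗ = deg x for all homogeneous x), then the sequence η is symmetric, i.e., g_i = g_{n−i} for all i. -/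
/-!
The images `E a = star (single a a 1)` form a complete family of orthogonal idempotents of the
upper triangular matrices, and the diagonal is multiplicative on them, so at every diagonal
position `k` exactly one `E a` has entry `1`; call that index `m k`. For `i < j` the element
`z = star (single i j 1)` is nonzero, homogeneous of degree `d i j`, and `E j * z = z = z * E i`.
Its last nonzero row `p` and the first nonzero entry `(p, q)` of that row give `p < q` with
`m p = j`, `m q = i` and `d p q = d i j`. So `m` swaps the order of every consecutive pair, which
forces `m = Fin.rev`, and `d i j = d p q = d j.rev i.rev`.
-/

open Matrix

/-- A matrix is homogeneous of degree `h` in the elementary grading with degree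
function `d` (where `d i j` is the degree of the matrix unit `e_{ij}`) if it is upper
triangular and all of its nonzero entries sit in positions of degree `h`. -/
def IsHomD {n : ℕ} {K : Type*} [Field K] {G : Type*} [Group G]
    (d : Fin n → Fin n → G) (h : G) (x : Matrix (Fin n) (Fin n) K) : Prop :=
  (∀ i j : Fin n, j < i → x i j = 0) ∧ ∀ i j : Fin n, x i j ≠ 0 → d i j = h

namespace Matrix

variable {m R : Type*} [Fintype m] [LinearOrder m]

theorem mul_apply_eq_of_isUpperTriangular_left [NonUnitalNonAssocSemiring R]
    {A B : Matrix m m R} (hA : A.IsUpperTriangular) {p q : m}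
    (hB : ∀ k, p < k → B k q = 0) : (A * B) p q = A p p * B p q := by
  rw [mul_apply, Finset.sum_eq_single p (fun k _ hk => ?_) (by simp)]
  rcases hk.lt_or_gt with h | h
  · rw [hA h, zero_mul]
  · rw [hB k h, mul_zero]

theorem mul_apply_eq_of_isUpperTriangular_right [NonUnitalNonAssocSemiring R]
    {A B : Matrix m m R} (hB : B.IsUpperTriangular) {p q : m}
    (hA : ∀ k, k < q → A p k = 0) : (A * B) p q = A p q * B q q := by
  rw [mul_apply, Finset.sum_eq_single q (fun k _ hk => ?_) (by simp)]
  rcases hk.lt_or_gt with h | h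
  · rw [hA k h, zero_mul]
  · rw [hB h, mul_zero]

theorem IsUpperTriangular.mul_apply_self [NonUnitalNonAssocSemiring R]
    {A B : Matrix m m R} (hA : A.IsUpperTriangular) (hB : B.IsUpperTriangular) (k : m) :
    (A * B) k k = A k k * B k k :=
  mul_apply_eq_of_isUpperTriangular_left hA fun _ h => hB h

/-- The witnesses are the last nonzero row `p` of `z` and the first nonzero column `q` in it. -/
theorem exists_ne_zero_diag_eq_one_of_mul_eq_self [Semiring R] [IsDomain R]
    {P Q z : Matrix m m R}
    (hP : P.IsUpperTriangular) (hQ : Q.IsUpperTriangular) (hPz : P * z = z) (hzQ : z * Q = z)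
    (hz : z ≠ 0) : ∃ p q, z p q ≠ 0 ∧ P p p = 1 ∧ Q q q = 1 := by
  classical
  obtain ⟨k, l, hkl⟩ : ∃ k l, z k l ≠ 0 := by
    by_contra! h
    exact hz (ext h)
  obtain ⟨p, hp, hp_max⟩ := (Finset.univ.filter fun k => ∃ l, z k l ≠ 0).exists_max_image id
    ⟨k, by simpa using ⟨l, hkl⟩⟩
  obtain ⟨l, hl⟩ := (Finset.mem_filter.mp hp).2
  obtain ⟨q, hq, hq_min⟩ := (Finset.univ.filter fun l => z p l ≠ 0).exists_min_image id
    ⟨l, by simpa using hl⟩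
  have hpq : z p q ≠ 0 := (Finset.mem_filter.mp hq).2
  have below_p : ∀ k, p < k → z k q = 0 := fun k hk => by
    by_contra h
    exact hk.not_ge (hp_max k (by simpa using ⟨q, h⟩))
  have before_q : ∀ k, k < q → z p k = 0 := fun k hk => by
    by_contra h
    exact hk.not_ge (hq_min k (by simpa using h))
  refine ⟨p, q, hpq, ?_, ?_⟩
  · rw [← mul_eq_right₀ hpq]
    conv_rhs => rw [← hPz]
    exact (mul_apply_eq_of_isUpperTriangular_left hP below_p).symm
  · rw [← mul_eq_left₀ hpq]
    conv_rhs => rw [← hzQ]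
    exact (mul_apply_eq_of_isUpperTriangular_right hQ before_q).symm

end Matrix

theorem CompleteOrthogonalIdempotents.apply_self_of_isUpperTriangular {m R ι : Type*} [Fintype m]
    [LinearOrder m] [DecidableEq m] [Semiring R]
    [Fintype ι] {E : ι → Matrix m m R} (hE : CompleteOrthogonalIdempotents E)
    (hut : ∀ a, (E a).IsUpperTriangular) (k : m) :
    CompleteOrthogonalIdempotents fun a => E a k k where
  idem a := by
    rw [IsIdempotentElem, ← (hut a).mul_apply_self (hut a), (hE.idem a).eq]
  ortho a b hab := by
    simp only [← (hut a).mul_apply_self (hut b), hE.ortho hab, Matrix.zero_apply]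
  complete := by rw [← Matrix.sum_apply, hE.complete, one_apply_eq]

theorem CompleteOrthogonalIdempotents.existsUnique_eq_one {R ι : Type*} [Semiring R]
    [IsDomain R] [Fintype ι] {e : ι → R} (he : CompleteOrthogonalIdempotents e) :
    ∃! a, e a = 1 := by
  obtain ⟨a, -, ha⟩ := Finset.exists_ne_zero_of_sum_ne_zero (he.complete ▸ one_ne_zero)
  have ha' := (IsIdempotentElem.iff_eq_zero_or_one.mp (he.idem a)).resolve_left ha
  refine ⟨a, ha', fun b hb => ?_⟩
  by_contra hba
  simpa [ha', hb] using he.ortho hba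

theorem Fin.apply_eq_rev_of_forall_exists_lt {n : ℕ} (m : Fin (n + 1) → Fin (n + 1))
    (h : ∀ a : Fin n, ∃ p q, p < q ∧ m p = a.succ ∧ m q = a.castSucc) (k : Fin (n + 1)) :
    m k = k.rev := by
  have hm_surj : m.Surjective := by
    intro t
    rcases Fin.eq_zero_or_eq_succ t with rfl | ⟨a, rfl⟩
    · cases n with
      | zero => exact ⟨0, Subsingleton.elim (α := Fin 1) _ _⟩
      | succ n => obtain ⟨-, q, -, -, hq⟩ := h 0; exact ⟨q, hq⟩
    · obtain ⟨p, -, -, hp, -⟩ := h a; exact ⟨p, hp⟩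
  let e := Equiv.ofBijective m ⟨Finite.injective_iff_surjective.mpr hm_surj, hm_surj⟩
  have he_anti : StrictAnti e.symm := Fin.strictAnti_iff_succ_lt.mpr fun a => by
    obtain ⟨p, q, hpq, hp, hq⟩ := h a
    rwa [e.symm_apply_eq.mpr hp.symm, e.symm_apply_eq.mpr hq.symm]
  have h_rev : (e.symm (m k)).rev = m k := (Fin.rev_strictAnti.comp he_anti).apply_eq
  rw [show e.symm (m k) = k from e.symm_apply_apply k] at h_rev
  exact h_rev.symm

structure IsGradedInvolution {n : ℕ} {K : Type*} [Field K] {G : Type*} [Group G]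
    (d : Fin n → Fin n → G) (star : Matrix (Fin n) (Fin n) K → Matrix (Fin n) (Fin n) K) :
    Prop where
  isLinearMap : IsLinearMap K star
  star_star : ∀ x : Matrix (Fin n) (Fin n) K, x.IsUpperTriangular → star (star x) = x
  star_mul : ∀ x y : Matrix (Fin n) (Fin n) K, x.IsUpperTriangular → y.IsUpperTriangular →
    star (x * y) = star y * star x
  isHomD_star : ∀ (h : G) (x : Matrix (Fin n) (Fin n) K), IsHomD d h x → IsHomD d h (star x)

section Graded

variable {n : ℕ} {K : Type*} [Field K] {G : Type*} [Group G] {d : Fin n → Fin n → G}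

theorem IsHomD.isUpperTriangular {h : G} {x : Matrix (Fin n) (Fin n) K} (hx : IsHomD d h x) :
    x.IsUpperTriangular :=
  fun _ _ hji => hx.1 _ _ hji

theorem isHomD_single (d : Fin n → Fin n → G) {i j : Fin n} (hij : i ≤ j) (c : K) :
    IsHomD d (d i j) (single i j c) := by
  refine ⟨fun p q hqp => blockTriangular_single (b := id) hij c hqp, fun p q hpq => ?_⟩
  obtain ⟨rfl, rfl⟩ : i = p ∧ j = q := by
    by_contra h
    exact hpq (single_apply_of_ne _ _ _ _ _ h)
  rfl

namespace IsGradedInvolution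

variable {star : Matrix (Fin n) (Fin n) K → Matrix (Fin n) (Fin n) K}

theorem star_zero (hs : IsGradedInvolution d star) : star 0 = 0 :=
  hs.isLinearMap.map_zero

theorem isUpperTriangular_star (hs : IsGradedInvolution d star) {x : Matrix (Fin n) (Fin n) K}
    (hx : x.IsUpperTriangular) : (star x).IsUpperTriangular := by
  intro a b hba
  rw [matrix_eq_sum_single x, ← IsLinearMap.mk'_apply hs.isLinearMap, map_sum, Matrix.sum_apply]
  refine Finset.sum_eq_zero fun i _ => ?_
  rw [map_sum, Matrix.sum_apply]
  refine Finset.sum_eq_zero fun j _ => ?_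
  rw [IsLinearMap.mk'_apply]
  rcases lt_or_ge j i with hji | hij
  · rw [hx hji, single_zero, hs.star_zero, Matrix.zero_apply]
  · exact (hs.isHomD_star _ _ (isHomD_single d hij (x i j))).isUpperTriangular hba

theorem star_one (hs : IsGradedInvolution d star) : star 1 = 1 := by
  have h := hs.star_mul (star 1) 1 (hs.isUpperTriangular_star blockTriangular_one)
    blockTriangular_one
  rwa [mul_one, hs.star_star 1 blockTriangular_one, mul_one, eq_comm] at h

theorem completeOrthogonalIdempotents_star_single (hs : IsGradedInvolution d star) :
    CompleteOrthogonalIdempotents fun a : Fin n => star (single a a (1 : K)) where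
  idem a := by
    rw [IsIdempotentElem, ← hs.star_mul _ _ (blockTriangular_single le_rfl 1)
      (blockTriangular_single le_rfl 1), single_mul_single_same, one_mul]
  ortho a b hab := by
    show star _ * star _ = 0
    rw [← hs.star_mul _ _ (blockTriangular_single le_rfl 1) (blockTriangular_single le_rfl 1),
      single_mul_single_of_ne (h := hab.symm), hs.star_zero]
  complete := by
    rw [← hs.star_one, ← sum_single_one, ← IsLinearMap.mk'_apply hs.isLinearMap, map_sum]
    rfl

theorem existsUnique_star_single_apply_eq_one (hs : IsGradedInvolution d star) (k : Fin n) :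
    ∃! a, star (single a a (1 : K)) k k = 1 :=
  (hs.completeOrthogonalIdempotents_star_single.apply_self_of_isUpperTriangular
    (fun _ => hs.isUpperTriangular_star (blockTriangular_single le_rfl 1)) k).existsUnique_eq_one

theorem exists_lt_and_degree_eq (hs : IsGradedInvolution d star) {i j : Fin n} (hij : i < j) :
    ∃ p q, p < q ∧ star (single j j (1 : K)) p p = 1 ∧ star (single i i (1 : K)) q q = 1 ∧
      d p q = d i j := by
  have hE_ij : (single i j (1 : K)).IsUpperTriangular := blockTriangular_single hij.le 1
  have hE_ii : (single i i (1 : K)).IsUpperTriangular := blockTriangular_single le_rfl 1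
  have hE_jj : (single j j (1 : K)).IsUpperTriangular := blockTriangular_single le_rfl 1
  have hz_hom := hs.isHomD_star _ _ (isHomD_single d hij.le (1 : K))
  have hz : star (single i j (1 : K)) ≠ 0 := fun h => by
    have h_inv := hs.star_star _ hE_ij
    rw [h, hs.star_zero] at h_inv
    simpa using congrFun (congrFun h_inv i) j
  have hPz : star (single j j 1) * star (single i j (1 : K)) = star (single i j 1) := by
    rw [← hs.star_mul _ _ hE_ij hE_jj, single_mul_single_same, one_mul]
  have hzQ : star (single i j 1) * star (single i i (1 : K)) = star (single i j 1) := by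
    rw [← hs.star_mul _ _ hE_ii hE_ij, single_mul_single_same, one_mul]
  obtain ⟨p, q, hpq, hp, hq⟩ := exists_ne_zero_diag_eq_one_of_mul_eq_self
    (hs.isUpperTriangular_star hE_jj) (hs.isUpperTriangular_star hE_ii) hPz hzQ hz
  have hp_ne_q : p ≠ q := by
    rintro rfl
    exact hij.ne ((hs.existsUnique_star_single_apply_eq_one p).unique hq hp)
  exact ⟨p, q, (not_lt.mp fun h => hpq (hz_hom.1 p q h)).lt_of_ne hp_ne_q, hp, hq,
    hz_hom.2 p q hpq⟩

end IsGradedInvolution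

end Graded

theorem graded_involution_implies_symmetric_general {n : ℕ} {K : Type*} [Field K]
    {G : Type*} [Group G]
    (d : Fin n → Fin n → G)
    (star : Matrix (Fin n) (Fin n) K → Matrix (Fin n) (Fin n) K)
    (hlin : IsLinearMap K star)
    (hinv : ∀ x : Matrix (Fin n) (Fin n) K, (∀ i j : Fin n, j < i → x i j = 0) →
      star (star x) = x)
    (hanti : ∀ x y : Matrix (Fin n) (Fin n) K,
      (∀ i j : Fin n, j < i → x i j = 0) → (∀ i j : Fin n, j < i → y i j = 0) →
      star (x * y) = star y * star x)
    (hgr : ∀ (h : G) (x : Matrix (Fin n) (Fin n) K), IsHomD d h x → IsHomD d h (star x)) :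
    ∀ i j : Fin n, (j : ℕ) = (i : ℕ) + 1 → d i j = d j.rev i.rev := by
  have hs : IsGradedInvolution d star :=
    ⟨hlin, fun x hx => hinv x fun _ _ h => hx h,
      fun x y hx hy => hanti x y (fun _ _ h => hx h) (fun _ _ h => hy h), hgr⟩
  intro i j hij
  obtain ⟨N, rfl⟩ : ∃ N, n = N + 1 := ⟨n - 1, by omega⟩
  choose m _ hm_unique using hs.existsUnique_star_single_apply_eq_one
  have hm_rev : ∀ k, m k = k.rev := Fin.apply_eq_rev_of_forall_exists_lt m fun a => by
    obtain ⟨p, q, hpq, hp, hq, -⟩ :=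
      hs.exists_lt_and_degree_eq (i := a.castSucc) (j := a.succ) Fin.castSucc_lt_succ
    exact ⟨p, q, hpq, (hm_unique p _ hp).symm, (hm_unique q _ hq).symm⟩
  obtain ⟨p, q, -, hp, hq, hd⟩ :=
    hs.exists_lt_and_degree_eq (i := i) (j := j) (by rw [Fin.lt_def]; omega)
  obtain rfl : j = p.rev := (hm_unique p j hp).trans (hm_rev p)
  obtain rfl : i = q.rev := (hm_unique q i hq).trans (hm_rev q)
  rw [Fin.rev_rev, Fin.rev_rev, hd]

/-- if the upper triangular matrices, with the elementary `G`-grading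
whose degree function is `d` (so `η i = d i (i+1)`), admit a graded linear involution,
then the sequence `η` is symmetric: `g_i = g_{n-i}`, i.e.
`d i j = d (rev j) (rev i)` for consecutive `i, j`. -/
theorem graded_involution_implies_symmetric {n : ℕ} {K : Type*} [Field K]
    {G : Type*} [Group G] (hchar : (2 : K) ≠ 0)
    (d : Fin n → Fin n → G)
    (hdm : ∀ i j k : Fin n, i ≤ j → j ≤ k → d i j * d j k = d i k)
    (star : Matrix (Fin n) (Fin n) K → Matrix (Fin n) (Fin n) K)
    (hlin : IsLinearMap K star)
    (hinv : ∀ x : Matrix (Fin n) (Fin n) K, (∀ i j : Fin n, j < i → x i j = 0) →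
      star (star x) = x)
    (hanti : ∀ x y : Matrix (Fin n) (Fin n) K,
      (∀ i j : Fin n, j < i → x i j = 0) → (∀ i j : Fin n, j < i → y i j = 0) →
      star (x * y) = star y * star x)
    (hgr : ∀ (h : G) (x : Matrix (Fin n) (Fin n) K), IsHomD d h x → IsHomD d h (star x)) :
    ∀ i j : Fin n, (j : ℕ) = (i : ℕ) + 1 → d i j = d j.rev i.rev :=
  graded_involution_implies_symmetric_general d star hlin hinv hanti hgr
end

section
/- Let UT_n carry an elementary G-grading given by η = (g_1,…,g_{n−1}) ∈ G^{n−1}. If UT_n admits a graded involution, then the support of the grading is commutative; more precisely, g_i g_j = g_j g_i for all i, j. -/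
open Matrix

/-!
A graded involution `*` of `UT_n` preserves the powers `J ^ m` of the radical, and the image of
the matrix unit `e p q` lies in `J ^ (q - p)` but not in `J ^ (q - p + 1)`. The images
`f p = (e p p)*` are orthogonal idempotents, and `e p q = e p p * e p q * e q q` shows that every
leading entry `(a, b)` of `(e p q)*` has `f q a a ≠ 0` and `f p b b ≠ 0`. Together these force
`(a, b) = (rev q, rev p)`, so homogeneity of `(e p q)*` gives `d (rev q) (rev p) = d p q`.
Then `d p r = d p q * d q r = d q r * d p q`: adjacent intervals commute, and hence so do the
generators `d i (i + 1)`.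
-/

/-- `x` lies in `J ^ m` for the Jacobson radical `J` of the upper triangular matrices. -/
def InRadPow {n : ℕ} {R : Type*} [Zero R] (m : ℕ) (x : Matrix (Fin n) (Fin n) R) : Prop :=
  ∀ i j : Fin n, (j : ℕ) < i + m → x i j = 0

section RadicalFiltration

variable {n : ℕ} {R : Type*}

theorem InRadPow.mono [Zero R] {m m' : ℕ} {x : Matrix (Fin n) (Fin n) R} (hx : InRadPow m x)
    (h : m' ≤ m) : InRadPow m' x :=
  fun i j hij => hx i j (by omega)

theorem InRadPow.isUpperTriangular [Zero R] {m : ℕ} {x : Matrix (Fin n) (Fin n) R}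
    (hx : InRadPow m x) : x.IsUpperTriangular :=
  fun i j (hij : j < i) => hx i j (by omega)

theorem Matrix.IsUpperTriangular.inRadPow_zero [Zero R] {x : Matrix (Fin n) (Fin n) R}
    (hx : x.IsUpperTriangular) : InRadPow 0 x :=
  fun i j hij => hx (show j < i by omega)

variable [NonUnitalNonAssocSemiring R] {x y : Matrix (Fin n) (Fin n) R}

theorem InRadPow.mul {p q : ℕ} (hx : InRadPow p x) (hy : InRadPow q y) :
    InRadPow (p + q) (x * y) := by
  intro a b hab
  rw [mul_apply]
  refine Finset.sum_eq_zero fun c _ => ?_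
  rcases lt_or_ge (c : ℕ) (a + p) with h | h
  · rw [hx a c h, zero_mul]
  · rw [hy c b (by omega), mul_zero]

theorem Matrix.IsUpperTriangular.mul_apply_of_inRadPow {m : ℕ} (hx : x.IsUpperTriangular)
    (hy : InRadPow m y) {a b : Fin n} (hab : (b : ℕ) = a + m) :
    (x * y) a b = x a a * y a b := by
  rw [mul_apply]
  refine Fintype.sum_eq_single a fun c hc => ?_
  rcases lt_or_gt_of_ne (Fin.val_ne_of_ne hc) with h | h
  · rw [hx (Fin.lt_def.mpr h), zero_mul]
  · rw [hy c b (by omega), mul_zero]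

theorem InRadPow.mul_apply_of_isUpperTriangular {m : ℕ} (hx : InRadPow m x)
    (hy : y.IsUpperTriangular) {a b : Fin n} (hab : (b : ℕ) = a + m) :
    (x * y) a b = x a b * y b b := by
  rw [mul_apply]
  refine Fintype.sum_eq_single b fun c hc => ?_
  rcases lt_or_gt_of_ne (Fin.val_ne_of_ne hc) with h | h
  · rw [hx a c (by omega), zero_mul]
  · rw [hy (Fin.lt_def.mpr h), mul_zero]

theorem inRadPow_one_of_mul_self_eq_zero [NoZeroDivisors R] (hx : x.IsUpperTriangular)
    (h : x * x = 0) : InRadPow 1 x := by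
  intro a b hab
  rcases lt_or_eq_of_le (Nat.lt_succ_iff.mp hab) with hba | hba
  · exact hx (Fin.lt_def.mpr hba)
  · obtain rfl : b = a := Fin.ext hba
    have hsq := congrFun (congrFun h b) b
    rwa [hx.mul_apply_of_inRadPow hx.inRadPow_zero rfl, Matrix.zero_apply, mul_self_eq_zero] at hsq

theorem InRadPow.exists_apply_ne_zero {m : ℕ} (hx : InRadPow m x) (h : ¬ InRadPow (m + 1) x) :
    ∃ a b : Fin n, (b : ℕ) = a + m ∧ x a b ≠ 0 := by
  simp only [InRadPow, not_forall] at h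
  obtain ⟨a, b, hab, hne⟩ := h
  exact ⟨a, b, by by_contra h; exact hne (hx a b (by omega)), hne⟩

end RadicalFiltration

theorem Matrix.isUpperTriangular_single {n : ℕ} {R : Type*} [Zero R] {p q : Fin n} (hpq : p ≤ q)
    (c : R) : (single p q c).IsUpperTriangular :=
  blockTriangular_single hpq c

theorem InRadPow.map_of_single {n m : ℕ} {K : Type*} [CommRing K]
    {f : Matrix (Fin n) (Fin n) K → Matrix (Fin n) (Fin n) K} (hf : IsLinearMap K f)
    (h : ∀ p q : Fin n, (p : ℕ) + m ≤ q → InRadPow m (f (single p q 1)))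
    {x : Matrix (Fin n) (Fin n) K} (hx : InRadPow m x) : InRadPow m (f x) := by
  have hsum : f x = ∑ p, ∑ q, x p q • f (single p q 1) := by
    conv_lhs => rw [matrix_eq_sum_single x]
    change hf.mk' f _ = _
    simp only [map_sum, ← hf.mk'_apply, ← LinearMap.map_smul, smul_single, smul_eq_mul, mul_one]
  intro a b hab
  rw [hsum, Matrix.sum_apply]
  refine Finset.sum_eq_zero fun p _ => ?_
  rw [Matrix.sum_apply]
  refine Finset.sum_eq_zero fun q _ => ?_
  by_cases hpq : (p : ℕ) + m ≤ q
  · rw [Matrix.smul_apply, h p q hpq a b hab, smul_zero]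
  · rw [hx p q (by omega), zero_smul, Matrix.zero_apply]

theorem Fin.eq_rev_of_add_val_eq {n : ℕ} {ρ : Fin n → Fin n}
    (h : ∀ p q : Fin n, p ≤ q → (ρ p : ℕ) + p = ρ q + q) : ρ = Fin.rev := by
  funext k
  obtain ⟨m, rfl⟩ : ∃ m, n = m + 1 := ⟨n - 1, by have := k.isLt; omega⟩
  have hlast := h 0 (Fin.last m) (Fin.zero_le _)
  have hk := h 0 k (Fin.zero_le _)
  have := (ρ 0).isLt
  ext
  simp only [Fin.val_rev, Fin.val_last, Fin.val_zero] at hlast hk ⊢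
  omega

/-- An involution of the algebra of upper triangular matrices, given as a map on all matrices. -/
structure IsUTInvolution {n : ℕ} {K : Type*} [CommRing K]
    (star : Matrix (Fin n) (Fin n) K → Matrix (Fin n) (Fin n) K) : Prop where
  isLinearMap : IsLinearMap K star
  isUpperTriangular_star : ∀ x, x.IsUpperTriangular → (star x).IsUpperTriangular
  star_star : ∀ x, x.IsUpperTriangular → star (star x) = x
  star_mul : ∀ x y, x.IsUpperTriangular → y.IsUpperTriangular → star (x * y) = star y * star x

namespace IsUTInvolution

variable {n : ℕ} {K : Type*} [CommRing K]
  {star : Matrix (Fin n) (Fin n) K → Matrix (Fin n) (Fin n) K}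

theorem star_single_mul_star_single_eq_zero (hs : IsUTInvolution star) {p q r s : Fin n}
    (hpq : p ≤ q) (hrs : r ≤ s) (hsp : s ≠ p) :
    star (single p q 1) * star (single r s 1) = 0 := by
  rw [← hs.star_mul _ _ (isUpperTriangular_single hrs 1) (isUpperTriangular_single hpq 1),
    single_mul_single_of_ne _ _ _ _ hsp, hs.isLinearMap.map_zero]

theorem inRadPow_star_single [IsDomain K] (hs : IsUTInvolution star) {m : ℕ} {p q : Fin n}
    (hpq : (p : ℕ) + m = q) : InRadPow m (star (single p q 1)) := by
  induction m generalizing p q with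
  | zero =>
    obtain rfl : p = q := Fin.ext hpq
    exact (hs.isUpperTriangular_star _ (isUpperTriangular_single le_rfl 1)).inRadPow_zero
  | succ m ih =>
    let p₁ : Fin n := ⟨p + 1, by omega⟩
    have hpp₁ : p ≤ p₁ := Fin.le_def.mpr (by simp [p₁])
    have hp₁q : p₁ ≤ q := Fin.le_def.mpr (by simp [p₁]; omega)
    have hstep : InRadPow 1 (star (single p p₁ 1)) :=
      inRadPow_one_of_mul_self_eq_zero
        (hs.isUpperTriangular_star _ (isUpperTriangular_single hpp₁ 1))
        (hs.star_single_mul_star_single_eq_zero hpp₁ hpp₁ (Fin.ne_of_val_ne (by simp [p₁])))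
    have hsplit : single p q (1 : K) = single p p₁ 1 * single p₁ q 1 := by
      rw [single_mul_single_same, one_mul]
    rw [hsplit,
      hs.star_mul _ _ (isUpperTriangular_single hpp₁ 1) (isUpperTriangular_single hp₁q 1)]
    exact (ih (by simp [p₁]; omega)).mul hstep

theorem inRadPow_star [IsDomain K] (hs : IsUTInvolution star) {m : ℕ}
    {x : Matrix (Fin n) (Fin n) K} (hx : InRadPow m x) : InRadPow m (star x) :=
  InRadPow.map_of_single hs.isLinearMap
    (fun p q hpq => (hs.inRadPow_star_single (p := p) (q := q) (m := q - p) (by omega)).mono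
      (by omega)) hx

theorem exists_star_single_apply_ne_zero [IsDomain K] (hs : IsUTInvolution star) {p q : Fin n}
    (hpq : p ≤ q) :
    ∃ a b : Fin n, (b : ℕ) = a + (q - p) ∧ star (single p q 1) a b ≠ 0 := by
  refine (hs.inRadPow_star_single (by omega)).exists_apply_ne_zero fun h => ?_
  have hq := hs.inRadPow_star h p q (by omega)
  rw [hs.star_star _ (isUpperTriangular_single hpq 1), single_apply_same] at hq
  exact one_ne_zero hq

theorem star_single_diag_ne_zero_of_apply_ne_zero [IsDomain K] (hs : IsUTInvolution star)
    {p q a b : Fin n} (hpq : p ≤ q) (hab : (b : ℕ) = a + (q - p))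
    (h : star (single p q 1) a b ≠ 0) :
    star (single q q 1) a a ≠ 0 ∧ star (single p p 1) b b ≠ 0 := by
  have ht : InRadPow (q - p) (star (single p q 1)) := hs.inRadPow_star_single (by omega)
  have hleft : star (single p q 1) = star (single q q 1) * star (single p q 1) := by
    rw [← hs.star_mul _ _ (isUpperTriangular_single hpq 1) (isUpperTriangular_single le_rfl 1),
      single_mul_single_same, one_mul]
  have hright : star (single p q 1) = star (single p q 1) * star (single p p 1) := by
    rw [← hs.star_mul _ _ (isUpperTriangular_single le_rfl 1) (isUpperTriangular_single hpq 1),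
      single_mul_single_same, one_mul]
  have hdiag (r : Fin n) : (star (single r r (1 : K))).IsUpperTriangular :=
    hs.isUpperTriangular_star _ (isUpperTriangular_single le_rfl 1)
  constructor
  · intro h0
    rw [hleft, (hdiag q).mul_apply_of_inRadPow ht hab, h0, zero_mul] at h
    exact h rfl
  · intro h0
    rw [hright, ht.mul_apply_of_isUpperTriangular (hdiag p) hab, h0, mul_zero] at h
    exact h rfl

theorem eq_of_star_single_diag_ne_zero [IsDomain K] (hs : IsUTInvolution star) {p q a : Fin n}
    (hp : star (single p p 1) a a ≠ 0) (hq : star (single q q 1) a a ≠ 0) : p = q := by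
  by_contra hpq
  have hdiag := congrFun (congrFun
    (hs.star_single_mul_star_single_eq_zero le_rfl le_rfl (Ne.symm hpq)) a) a
  rw [(hs.isUpperTriangular_star _ (isUpperTriangular_single le_rfl 1)).mul_apply_of_inRadPow
    (hs.isUpperTriangular_star _ (isUpperTriangular_single le_rfl 1)).inRadPow_zero rfl,
    Matrix.zero_apply] at hdiag
  exact (mul_ne_zero hp hq) hdiag

theorem eq_rev_of_star_single_diag_ne_zero [IsDomain K] (hs : IsUTInvolution star) {p a : Fin n}
    (h : star (single p p 1) a a ≠ 0) : a = p.rev := by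
  have hex (p : Fin n) : ∃ a, star (single p p 1) a a ≠ 0 := by
    obtain ⟨a, b, hab, hne⟩ := hs.exists_star_single_apply_ne_zero (le_refl p)
    obtain rfl : b = a := Fin.ext (by omega)
    exact ⟨_, hne⟩
  choose ρ hρ using hex
  have hρ_surj : Function.Surjective ρ := Finite.injective_iff_surjective.mp
    fun p q hpq => hs.eq_of_star_single_diag_ne_zero (hρ p) (hpq ▸ hρ q)
  have hρ_eq {a p : Fin n} (h : star (single p p 1) a a ≠ 0) : a = ρ p := by
    obtain ⟨q, rfl⟩ := hρ_surj a
    rw [hs.eq_of_star_single_diag_ne_zero (hρ q) h]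
  have hρ_rev : ρ = Fin.rev := Fin.eq_rev_of_add_val_eq fun p q hpq => by
    obtain ⟨a, b, hab, hne⟩ := hs.exists_star_single_apply_ne_zero hpq
    obtain ⟨ha, hb⟩ := hs.star_single_diag_ne_zero_of_apply_ne_zero hpq hab hne
    rw [← hρ_eq ha, ← hρ_eq hb]
    omega
  rw [hρ_eq h, hρ_rev]

end IsUTInvolution

theorem isHomD_single_s11 {n : ℕ} {K : Type*} [Field K] {G : Type*} [Group G]
    (d : Fin n → Fin n → G) {p q : Fin n} (hpq : p ≤ q) :
    IsHomD d (d p q) (single p q (1 : K)) := by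
  refine ⟨isUpperTriangular_single hpq 1, fun a b hab => ?_⟩
  obtain ⟨rfl, rfl⟩ : p = a ∧ q = b := by
    by_contra h
    exact hab (single_apply_of_ne _ _ _ _ _ h)
  rfl

section ChainCocycle

variable {n : ℕ} {G : Type*} [Group G] {d : Fin n → Fin n → G}

theorem commute_of_le_of_le 
    (hdm : ∀ i j k : Fin n, i ≤ j → j ≤ k → d i j * d j k = d i k)
    (hrev : ∀ p q : Fin n, p ≤ q → d q.rev p.rev = d p q) {p q r : Fin n} (hpq : p ≤ q)
    (hqr : q ≤ r) : Commute (d p q) (d q r) := by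
  have hr : r.rev ≤ q.rev := Fin.rev_le_rev.mpr hqr
  have hq : q.rev ≤ p.rev := Fin.rev_le_rev.mpr hpq
  calc d p q * d q r = d p r := hdm p q r hpq hqr
    _ = d r.rev q.rev * d q.rev p.rev := by rw [hdm _ _ _ hr hq, hrev p r (hpq.trans hqr)]
    _ = d q r * d p q := by rw [hrev q r hqr, hrev p q hpq]

theorem commute_of_le_of_le_of_le 
    (hdm : ∀ i j k : Fin n, i ≤ j → j ≤ k → d i j * d j k = d i k)
    (hrev : ∀ p q : Fin n, p ≤ q → d q.rev p.rev = d p q) {p q r s : Fin n} (hpq : p ≤ q)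
    (hqr : q ≤ r) (hrs : r ≤ s) : Commute (d p q) (d r s) := by
  have hsplit : d r s = (d q r)⁻¹ * d q s := by rw [← hdm q r s hqr hrs, inv_mul_cancel_left]
  rw [hsplit]
  exact ((commute_of_le_of_le hdm hrev hpq hqr).inv_right).mul_right
    (commute_of_le_of_le hdm hrev hpq (hqr.trans hrs))

theorem commute_of_val_eq_succ 
    (hdm : ∀ i j k : Fin n, i ≤ j → j ≤ k → d i j * d j k = d i k)
    (hrev : ∀ p q : Fin n, p ≤ q → d q.rev p.rev = d p q) {i j i' j' : Fin n}
    (hj : (j : ℕ) = i + 1) (hj' : (j' : ℕ) = i' + 1) : Commute (d i j) (d i' j') := by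
  rcases lt_trichotomy i i' with h | rfl | h
  · exact commute_of_le_of_le_of_le hdm hrev (Fin.le_def.mpr (by omega))
      (Fin.le_def.mpr (by omega)) (Fin.le_def.mpr (by omega))
  · obtain rfl : j = j' := Fin.ext (by omega)
    exact Commute.refl _
  · exact (commute_of_le_of_le_of_le hdm hrev (Fin.le_def.mpr (by omega))
      (Fin.le_def.mpr (by omega)) (Fin.le_def.mpr (by omega))).symm

end ChainCocycle

theorem graded_involution_implies_commutative_support_general {n : ℕ} {K : Type*} [Field K]
    {G : Type*} [Group G]
    (d : Fin n → Fin n → G)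
    (hdm : ∀ i j k : Fin n, i ≤ j → j ≤ k → d i j * d j k = d i k)
    (star : Matrix (Fin n) (Fin n) K → Matrix (Fin n) (Fin n) K)
    (hlin : IsLinearMap K star)
    (hinv : ∀ x : Matrix (Fin n) (Fin n) K, (∀ i j : Fin n, j < i → x i j = 0) →
      star (star x) = x)
    (hanti : ∀ x y : Matrix (Fin n) (Fin n) K,
      (∀ i j : Fin n, j < i → x i j = 0) → (∀ i j : Fin n, j < i → y i j = 0) →
      star (x * y) = star y * star x)
    (hgr : ∀ (h : G) (x : Matrix (Fin n) (Fin n) K), IsHomD d h x → IsHomD d h (star x)) :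
    ∀ i j i' j' : Fin n, (j : ℕ) = (i : ℕ) + 1 → (j' : ℕ) = (i' : ℕ) + 1 →
      d i j * d i' j' = d i' j' * d i j := by
  intro i j i' j' hj hj'
  have hs : IsUTInvolution star :=
    { isLinearMap := hlin
      isUpperTriangular_star := fun _ hx => InRadPow.isUpperTriangular <|
        InRadPow.map_of_single hlin (fun _ _ hpq => IsUpperTriangular.inRadPow_zero
          (hgr _ _ (isHomD_single_s11 d (Fin.le_def.mpr (by omega)))).1) hx.inRadPow_zero
      star_star := hinv
      star_mul := hanti }
  have hrev (p q : Fin n) (hpq : p ≤ q) : d q.rev p.rev = d p q := by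
    obtain ⟨a, b, hab, hne⟩ := hs.exists_star_single_apply_ne_zero hpq
    obtain ⟨ha, hb⟩ := hs.star_single_diag_ne_zero_of_apply_ne_zero hpq hab hne
    rw [← hs.eq_rev_of_star_single_diag_ne_zero ha, ← hs.eq_rev_of_star_single_diag_ne_zero hb]
    exact (hgr _ _ (isHomD_single_s11 d hpq)).2 a b hne
  exact (commute_of_val_eq_succ hdm hrev hj hj').eq

/-- if the upper triangular matrices with the elementary `G`-grading
with degree function `d` admit a graded linear involution, then the generators
`η i = d i (i+1)` of the support pairwise commute. -/
theorem graded_involution_implies_commutative_support {n : ℕ} {K : Type*} [Field K]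
    {G : Type*} [Group G] (hchar : (2 : K) ≠ 0)
    (d : Fin n → Fin n → G)
    (hdm : ∀ i j k : Fin n, i ≤ j → j ≤ k → d i j * d j k = d i k)
    (star : Matrix (Fin n) (Fin n) K → Matrix (Fin n) (Fin n) K)
    (hlin : IsLinearMap K star)
    (hinv : ∀ x : Matrix (Fin n) (Fin n) K, (∀ i j : Fin n, j < i → x i j = 0) →
      star (star x) = x)
    (hanti : ∀ x y : Matrix (Fin n) (Fin n) K,
      (∀ i j : Fin n, j < i → x i j = 0) → (∀ i j : Fin n, j < i → y i j = 0) →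
      star (x * y) = star y * star x)
    (hgr : ∀ (h : G) (x : Matrix (Fin n) (Fin n) K), IsHomD d h x → IsHomD d h (star x)) :
    ∀ i j i' j' : Fin n, (j : ℕ) = (i : ℕ) + 1 → (j' : ℕ) = (i' : ℕ) + 1 →
      d i j * d i' j' = d i' j' * d i j :=
  graded_involution_implies_commutative_support_general d hdm star hlin hinv hanti hgr
end

section
/- Let s = (a_1,…,a_n) ∈ K^n with a_1 + a_2 + ⋯ + a_n + 1 ≠ 0, and define the linear map ψ_s : UT_n → UT_n by ψ_s(e_{ij}) = e_{ij} + δ_{ij} a_i · I, where I is the identity matrix. Then ψ_s is an automorphism of the Lie algebra UT_n^(−). -/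
open Matrix

/-- The map `ψ_s` determined by `s = (a_1,…,a_n)`: on matrix units,
`ψ_s(e_{ij}) = e_{ij} + δ_{ij} a_i · I`. -/
noncomputable def psiMap {n : ℕ} {K : Type*} [Field K] (a : Fin n → K)
    (x : Matrix (Fin n) (Fin n) K) : Matrix (Fin n) (Fin n) K :=
  x + (∑ i : Fin n, a i * x i i) • (1 : Matrix (Fin n) (Fin n) K)

lemma trace_comm_zero {n : ℕ} {K : Type*} [Field K] (a : Fin n → K)
    (x y : Matrix (Fin n) (Fin n) K)
    (hx : ∀ i j : Fin n, j < i → x i j = 0) (hy : ∀ i j : Fin n, j < i → y i j = 0) :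
    (∑ i : Fin n, a i * (x * y - y * x) i i) = 0 := by
  have key : ∀ i : Fin n, (x * y) i i = x i i * y i i := by
    intro i
    rw [Matrix.mul_apply]
    rw [Finset.sum_eq_single i]
    · intro k _ hk
      rcases lt_or_gt_of_ne hk with h | h
      · rw [hx i k h, zero_mul]
      · rw [hy k i h, mul_zero]
    · intro h; exact absurd (Finset.mem_univ i) h
  have key' : ∀ i : Fin n, (y * x) i i = y i i * x i i := by
    intro i
    rw [Matrix.mul_apply]
    rw [Finset.sum_eq_single i]
    · intro k _ hk
      rcases lt_or_gt_of_ne hk with h | h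
      · rw [hy i k h, zero_mul]
      · rw [hx k i h, mul_zero]
    · intro h; exact absurd (Finset.mem_univ i) h
  apply Finset.sum_eq_zero
  intro i _
  simp [Matrix.sub_apply, key i, key' i, mul_comm]

/-- if `a_1 + ⋯ + a_n + 1 ≠ 0`, then `ψ_s` is an automorphism of the Lie
algebra of upper triangular matrices: linear, a bijection of the upper triangular
matrices onto themselves, and bracket preserving. -/
theorem psiMap_is_lie_automorphism {n : ℕ} {K : Type*} [Field K]
    (a : Fin n → K) (ha : (∑ i : Fin n, a i) + 1 ≠ 0) :
    IsLinearMap K (psiMap a) ∧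
    Set.BijOn (psiMap a)
      {x : Matrix (Fin n) (Fin n) K | ∀ i j : Fin n, j < i → x i j = 0}
      {x : Matrix (Fin n) (Fin n) K | ∀ i j : Fin n, j < i → x i j = 0} ∧
    (∀ x y : Matrix (Fin n) (Fin n) K,
      (∀ i j : Fin n, j < i → x i j = 0) → (∀ i j : Fin n, j < i → y i j = 0) →
      psiMap a (x * y - y * x) = psiMap a x * psiMap a y - psiMap a y * psiMap a x) := by
  set T : Matrix (Fin n) (Fin n) K → K := fun x => ∑ i : Fin n, a i * x i i with hT
  set S : K := ∑ i : Fin n, a i with hS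
  have hT1 : T 1 = S := by
    simp [hT, hS, Matrix.one_apply]
  have hTadd : ∀ x y, T (x + y) = T x + T y := by
    intro x y
    simp [hT, Matrix.add_apply, mul_add, Finset.sum_add_distrib]
  have hTsmul : ∀ (c : K) x, T (c • x) = c * T x := by
    intro c x
    simp only [hT, Matrix.smul_apply, Finset.mul_sum, smul_eq_mul]
    exact Finset.sum_congr rfl fun i _ => by ring
  have hpsi : ∀ x, psiMap a x = x + T x • (1 : Matrix (Fin n) (Fin n) K) := fun x => rfl
  have hTpsi : ∀ x, T (psiMap a x) = T x * (S + 1) := by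
    intro x
    rw [hpsi, hTadd, hTsmul, hT1]; ring
  refine ⟨⟨?_, ?_⟩, ⟨?_, ?_, ?_⟩, ?_⟩
  · intro x y
    rw [hpsi, hpsi, hpsi, hTadd, add_smul]
    abel
  · intro c x
    rw [hpsi, hpsi, hTsmul, smul_add, smul_smul]
  · -- maps to
    intro x hx i j hij
    simp only [hpsi, Matrix.add_apply, Matrix.smul_apply, Matrix.one_apply,
      if_neg hij.ne', smul_eq_mul, mul_zero, add_zero]
    exact hx i j hij
  · -- inj
    intro x hx y hy hxy
    have hTeq : T x = T y := by
      have := congrArg T hxy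
      rw [hTpsi, hTpsi] at this
      exact mul_right_cancel₀ ha this
    rw [hpsi, hpsi, hTeq] at hxy
    exact add_right_cancel hxy
  · -- surj
    intro y hy
    refine ⟨y - (T y / (S + 1)) • (1 : Matrix (Fin n) (Fin n) K), ?_, ?_⟩
    · intro i j hij
      simp only [Matrix.sub_apply, Matrix.smul_apply, Matrix.one_apply,
        if_neg hij.ne', smul_eq_mul, mul_zero, sub_zero]
      exact hy i j hij
    · have hTx : T (y - (T y / (S + 1)) • 1) = T y / (S + 1) := by
        have : y - (T y / (S + 1)) • (1 : Matrix (Fin n) (Fin n) K)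
            = y + (-(T y / (S + 1))) • 1 := by
          rw [neg_smul]; abel
        rw [this, hTadd, hTsmul, hT1]
        field_simp
        ring
      rw [hpsi, hTx]
      abel
  · -- bracket
    intro x y hx hy
    have h0 : T (x * y - y * x) = 0 := trace_comm_zero a x y hx hy
    rw [hpsi, hpsi, hpsi, h0, zero_smul, add_zero]
    simp only [mul_add, add_mul, Matrix.smul_mul, Matrix.mul_smul, mul_one, one_mul,
      smul_smul]
    rw [mul_comm (T y) (T x)]
    abel
end

section
/- If the field K is quadratically closed (every element of K is a square) and a ∈ UT_n is invertible, then a is ω-invertible (a ω(a) = ω(a) a = −k·I for some k ∈ K^*) if and only if there exists a scalar λ ∈ K^* such that (λa)⁻¹ = ω(λa). -/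
open Matrix

/-- The minus-flip `ω = −t`. -/
def omg {n : ℕ} {K : Type*} [Field K] (x : Matrix (Fin n) (Fin n) K) :
    Matrix (Fin n) (Fin n) K :=
  -tFlip x

/-! Since `ω` is linear, `(λa) ω(λa) = λ² a ω(a)`; so `a ω(a) = −k I` becomes
`(λa) ω(λa) = I` exactly when `λ² = (−k)⁻¹`, and such a `λ` exists because `K` is
quadratically closed. -/

section

variable {n : ℕ} {K : Type*} [Field K]

lemma omg_smul (c : K) (x : Matrix (Fin n) (Fin n) K) : omg (c • x) = c • omg x := by
  ext i j
  simp [omg, tFlip]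

lemma smul_mul_omg_smul (c : K) (a : Matrix (Fin n) (Fin n) K) :
    (c • a) * omg (c • a) = c ^ 2 • (a * omg a) := by
  rw [omg_smul, smul_mul_smul_comm, sq]

lemma omg_smul_mul_smul (c : K) (a : Matrix (Fin n) (Fin n) K) :
    omg (c • a) * (c • a) = c ^ 2 • (omg a * a) := by
  rw [omg_smul, smul_mul_smul_comm, sq]

end

lemma inv_neg_smul_eq_one_iff {K A : Type*} [Field K] [AddCommGroup A] [One A] [Module K A]
    {k : K} (hk : k ≠ 0) (x : A) : (-k)⁻¹ • x = 1 ↔ x = -(k • 1) := by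
  rw [inv_smul_eq_iff₀ (neg_ne_zero.mpr hk), neg_smul]

theorem omega_invertible_iff_scalar_multiple_general {n : ℕ} {K : Type*} [Field K]
    (hquad : ∀ k : K, ∃ x : K, x ^ 2 = k)
    (a : Matrix (Fin n) (Fin n) K) :
    (∃ k : K, k ≠ 0 ∧
        a * omg a = -(k • (1 : Matrix (Fin n) (Fin n) K)) ∧
        omg a * a = -(k • (1 : Matrix (Fin n) (Fin n) K))) ↔
      ∃ lam : K, lam ≠ 0 ∧
        (lam • a) * omg (lam • a) = 1 ∧ omg (lam • a) * (lam • a) = 1 := by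
  simp only [smul_mul_omg_smul, omg_smul_mul_smul]
  constructor
  · rintro ⟨k, hk, hleft, hright⟩
    obtain ⟨lam, hlam⟩ := hquad (-k)⁻¹
    have hlam0 : lam ≠ 0 := by
      rintro rfl
      simp [hk, eq_comm] at hlam
    refine ⟨lam, hlam0, ?_, ?_⟩ <;> rw [hlam, inv_neg_smul_eq_one_iff hk]
    exacts [hleft, hright]
  · rintro ⟨lam, hlam, hleft, hright⟩
    have hk : -(lam ^ 2)⁻¹ ≠ 0 := by simp [hlam]
    have hsq : lam ^ 2 = (-(-(lam ^ 2)⁻¹))⁻¹ := by simp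
    rw [hsq, inv_neg_smul_eq_one_iff hk] at hleft hright
    exact ⟨_, hk, hleft, hright⟩

/-- over a quadratically closed field, an invertible upper triangular
matrix `a` is `ω`-invertible (`a ω(a) = ω(a) a = −k·I` for some `k ≠ 0`) if and only
if some nonzero scalar multiple `λa` satisfies `(λa)⁻¹ = ω(λa)`. -/
theorem omega_invertible_iff_scalar_multiple {n : ℕ} {K : Type*} [Field K]
    (hchar : (2 : K) ≠ 0) (hquad : ∀ k : K, ∃ x : K, x ^ 2 = k)
    (a b : Matrix (Fin n) (Fin n) K)
    (hUTa : ∀ i j : Fin n, j < i → a i j = 0)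
    (hab : a * b = 1) (hba : b * a = 1) :
    (∃ k : K, k ≠ 0 ∧
        a * omg a = -(k • (1 : Matrix (Fin n) (Fin n) K)) ∧
        omg a * a = -(k • (1 : Matrix (Fin n) (Fin n) K))) ↔
      ∃ lam : K, lam ≠ 0 ∧
        (lam • a) * omg (lam • a) = 1 ∧ omg (lam • a) * (lam • a) = 1 :=
  omega_invertible_iff_scalar_multiple_general hquad a
end
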